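/- arXiv:2001.11467 — 2 statements merged into one kernel-verified Lean document; each statement's English description precedes it below -/
import Mathlib

section
/- Let S be a finite set of points in the plane with at least two elements, and define the separation distance s(S) as the maximum over all partitions S = I ∪ J into two nonempty parts of the distance d(I,J) = min_{x∈I, y∈J} |x−y|. Then (diam S)/|S| ≤ s(S) ≤ diam S, where diam S is the Euclidean diameter of S. -/
/-- The distance between two finite sets of points: the minimum pairwise distance. -/
noncomputable def pairDist (I J : Finset ℂ) : ℝ :=
  sInf {d : ℝ | ∃ x ∈ I, ∃ y ∈ J, d = dist x y}

/-- The separation distance of a finite set `S`: the largest `t` such that `S` can be split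
into two nonempty parts at mutual distance `t` (with the convention `0` when no such
partition exists, e.g. for singletons). -/
noncomputable def sepDist (S : Finset ℂ) : ℝ :=
  sSup {t : ℝ | ∃ I J : Finset ℂ, I ∪ J = S ∧ Disjoint I J ∧ I.Nonempty ∧ J.Nonempty ∧
    t = pairDist I J}

/-!
Take `a, b ∈ S` with `dist a b = diam S =: D` and put `t = D / n`, `n = #S`. The `n` half-open
annuli `k t ≤ dist a x < (k + 1) t`, `k < n`, around `a` contain the fewer than `n` points of
`S \ {b}`, and the innermost one contains `a`, so some annulus with `1 ≤ k < n` contains no point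
of `S`. Splitting `S` into the points inside and outside that annulus separates them by at least
the annulus width `t`.
-/

open Finset Metric

theorem Finset.exists_dist_eq_diam {α : Type*} [PseudoMetricSpace α] {s : Finset α}
    (hs : s.Nonempty) : ∃ a ∈ s, ∃ b ∈ s, dist a b = diam (s : Set α) := by
  obtain ⟨⟨a, b⟩, hab, hmax⟩ :=
    (s ×ˢ s).exists_max_image (fun p => dist p.1 p.2) (hs.product hs)
  obtain ⟨ha, hb⟩ := mem_product.mp hab
  refine ⟨a, ha, b, hb, le_antisymm (dist_le_diam_of_mem s.finite_toSet.isBounded ha hb) ?_⟩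
  exact diam_le_of_forall_dist_le dist_nonneg fun x hx y hy =>
    hmax (x, y) (mem_product.mpr ⟨hx, hy⟩)

theorem exists_gap_of_card_le {R : Finset ℝ} {n : ℕ} {t m : ℝ} (ht : 0 < t) (hR : #R ≤ n)
    (h0 : 0 ∈ R) (hm : m ∈ R) (hnm : n * t ≤ m) :
    ∃ k : ℕ, 1 ≤ k ∧ k < n ∧ ∀ r ∈ R, k * t ≤ r → (k + 1) * t ≤ r := by
  classical
  set F := R.filter (· < n * t)
  have hcard : #(F.image fun r => ⌊r / t⌋₊) < #(range n) := by
    calc #(F.image fun r => ⌊r / t⌋₊) ≤ #F := card_image_le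
      _ < #R := card_lt_card (filter_ssubset.mpr ⟨m, hm, not_lt.mpr hnm⟩)
      _ ≤ #(range n) := by rwa [card_range]
  obtain ⟨k, hk, hkF⟩ := exists_mem_notMem_of_card_lt_card hcard
  have hkn : k < n := mem_range.mp hk
  have hfloor : ∀ r ∈ R, r < n * t → ⌊r / t⌋₊ ≠ k := fun r hr hrn hrk =>
    hkF (mem_image.mpr ⟨r, mem_filter.mpr ⟨hr, hrn⟩, hrk⟩)
  have hk0 : k ≠ 0 := by
    rintro rfl
    exact hfloor 0 h0 (mul_pos (by exact_mod_cast hkn) ht) (by simp)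
  refine ⟨k, Nat.one_le_iff_ne_zero.mpr hk0, hkn, fun r hr hkr => ?_⟩
  by_contra! hrk
  have hkn' : (k + 1 : ℝ) * t ≤ n * t := by gcongr; exact_mod_cast hkn
  have hr0 : 0 ≤ r / t := div_nonneg ((by positivity : (0 : ℝ) ≤ k * t).trans hkr) ht.le
  exact hfloor r hr (hrk.trans_le hkn') <|
    (Nat.floor_eq_iff hr0).mpr ⟨(le_div_iff₀ ht).mpr hkr, (div_lt_iff₀ ht).mpr hrk⟩

theorem pairDist_le_dist {I J : Finset ℂ} {x y : ℂ} (hx : x ∈ I) (hy : y ∈ J) :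
    pairDist I J ≤ dist x y :=
  csInf_le ⟨0, by rintro _ ⟨_, -, _, -, rfl⟩; exact dist_nonneg⟩ ⟨x, hx, y, hy, rfl⟩

theorem le_pairDist {I J : Finset ℂ} {t : ℝ} (hI : I.Nonempty) (hJ : J.Nonempty)
    (h : ∀ x ∈ I, ∀ y ∈ J, t ≤ dist x y) : t ≤ pairDist I J := by
  obtain ⟨x, hx⟩ := hI
  obtain ⟨y, hy⟩ := hJ
  refine le_csInf ⟨_, x, hx, y, hy, rfl⟩ ?_
  rintro _ ⟨x, hx, y, hy, rfl⟩
  exact h x hx y hy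

theorem pairDist_le_diam {S I J : Finset ℂ} (hIJ : I ∪ J = S) (hI : I.Nonempty)
    (hJ : J.Nonempty) : pairDist I J ≤ diam (S : Set ℂ) := by
  obtain ⟨x, hx⟩ := hI
  obtain ⟨y, hy⟩ := hJ
  subst hIJ
  exact (pairDist_le_dist hx hy).trans <| dist_le_diam_of_mem (finite_toSet _).isBounded
    (mem_union_left J hx) (mem_union_right I hy)

theorem sepDist_le_diam (S : Finset ℂ) : sepDist S ≤ diam (S : Set ℂ) :=
  Real.sSup_le (by rintro _ ⟨I, J, hIJ, -, hI, hJ, rfl⟩; exact pairDist_le_diam hIJ hI hJ)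
    diam_nonneg

theorem pairDist_le_sepDist {S I J : Finset ℂ} (hIJ : I ∪ J = S) (hd : Disjoint I J)
    (hI : I.Nonempty) (hJ : J.Nonempty) : pairDist I J ≤ sepDist S :=
  le_csSup ⟨diam (S : Set ℂ), by
    rintro _ ⟨I, J, hIJ, -, hI, hJ, rfl⟩; exact pairDist_le_diam hIJ hI hJ⟩
    ⟨I, J, hIJ, hd, hI, hJ, rfl⟩

theorem le_sepDist_of_annulus_empty {S : Finset ℂ} {a b : ℂ} {r t : ℝ} (ha : a ∈ S)
    (hb : b ∈ S) (hr : 0 < r) (hrb : r ≤ dist a b)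
    (hgap : ∀ x ∈ S, r ≤ dist a x → r + t ≤ dist a x) : t ≤ sepDist S := by
  classical
  set I := S.filter (dist a · < r)
  set J := S.filter (¬ dist a · < r)
  have haI : a ∈ I := by simp [I, ha, hr]
  have hbJ : b ∈ J := by simp [J, hb, hrb]
  refine le_trans ?_ (pairDist_le_sepDist (filter_union_filter_not_eq _ S)
    (disjoint_filter_filter_not S S _) ⟨a, haI⟩ ⟨b, hbJ⟩)
  refine le_pairDist ⟨a, haI⟩ ⟨b, hbJ⟩ fun x hx y hy => ?_
  simp only [mem_filter, not_lt] at hx hy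
  linarith [hgap y hy.1 hy.2, dist_triangle a x y]

theorem stmt0 (S : Finset ℂ) (hS : 2 ≤ S.card) :
    Metric.diam (S : Set ℂ) / S.card ≤ sepDist S ∧
    sepDist S ≤ Metric.diam (S : Set ℂ) := by
  refine ⟨?_, sepDist_le_diam S⟩
  have hS' : S.Nontrivial := one_lt_card_iff_nontrivial.mp hS
  obtain ⟨a, ha, b, hb, hab⟩ := exists_dist_eq_diam hS'.nonempty
  have hD : 0 < diam (S : Set ℂ) := by
    obtain ⟨x, hx, y, hy, hxy⟩ := hS'
    exact (dist_pos.mpr hxy).trans_le (dist_le_diam_of_mem S.finite_toSet.isBounded hx hy)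
  have hn : (0 : ℝ) < #S := by exact_mod_cast hS'.nonempty.card_pos
  set t := diam (S : Set ℂ) / #S
  have hnt : #S * t = dist a b := by rw [hab, mul_div_cancel₀ _ hn.ne']
  obtain ⟨k, hk1, hkn, hgap⟩ := exists_gap_of_card_le (div_pos hD hn) card_image_le
    (mem_image.mpr ⟨a, ha, dist_self a⟩) (mem_image_of_mem (dist a) hb) hnt.le
  have hkt : k * t ≤ dist a b := by
    rw [← hnt]; gcongr
  refine le_sepDist_of_annulus_empty ha hb (by positivity) hkt fun x hx hkx => ?_
  linarith [hgap _ (mem_image_of_mem (dist a) hx) hkx]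
end

section
/- Fix γ ∈ (0,2) and an integer k with 1 ≤ k < 4/γ². Then the integral u_k := ∫_{𝔻^k} ∏_{1≤i<j≤k} |z_i − z_j|^{−γ²} dz_1 … dz_k over the k-fold product of the unit disk 𝔻 ⊂ ℂ is finite. -/
/-! Write `d i j = |z i - z j|`. By symmetry the integrand is `∏_{i ≠ j} d i j ^ (-γ²/2) = ∏ i, G i`
with `G i = ∏_{j ≠ i} d i j ^ (-γ²/2)`, and a product of `k` nonnegative numbers is at most the sum
of their `k`-th powers. So it suffices to integrate `G i ^ k = ∏_{j ≠ i} d i j ^ (-kγ²/2)`: once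
`z i` is fixed the other variables separate, each contributing `∫_𝔻 |z i - u| ^ (-kγ²/2) du`, and
this is bounded uniformly in `z i ∈ 𝔻` because `kγ²/2 < 2 = dim_ℝ ℂ`. -/

open MeasureTheory Metric Set Finset
open scoped ENNReal

section SingularKernel

variable {E : Type*} [NormedAddCommGroup E] [MeasurableSpace E] [BorelSpace E] {μ : Measure E}

theorem setLIntegral_ball_rpow_neg_dist [μ.IsAddRightInvariant] (w : E) (r β : ℝ) :
    ∫⁻ u in ball w r, ENNReal.ofReal (dist w u ^ (-β)) ∂μ
      = ∫⁻ v in ball 0 r, ENNReal.ofReal (‖v‖ ^ (-β)) ∂μ := by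
  rw [← lintegral_indicator measurableSet_ball, ← lintegral_indicator measurableSet_ball]
  conv_rhs => rw [← lintegral_sub_right_eq_self _ w]
  congr 1 with u
  simp only [indicator, mem_ball, dist_comm w u, dist_eq_norm, sub_zero]

theorem setLIntegral_ball_rpow_neg_dist_le [μ.IsAddRightInvariant] {r : ℝ} {w : E}
    (hw : w ∈ ball 0 r) (β : ℝ) :
    ∫⁻ u in ball 0 r, ENNReal.ofReal (dist w u ^ (-β)) ∂μ
      ≤ ∫⁻ v in ball 0 (2 * r), ENNReal.ofReal (‖v‖ ^ (-β)) ∂μ := by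
  rw [← setLIntegral_ball_rpow_neg_dist w]
  refine lintegral_mono_set fun u hu => ?_
  rw [mem_ball] at *
  calc dist u w ≤ dist u 0 + dist w 0 := dist_triangle_right u w 0
    _ < 2 * r := by linarith

theorem setLIntegral_ball_rpow_neg_norm_lt_top [NormedSpace ℝ E] [FiniteDimensional ℝ E]
    [μ.IsAddHaarMeasure] (hd : 1 ≤ Module.finrank ℝ E) {β : ℝ}
    (hβ : β < Module.finrank ℝ E) (r : ℝ) :
    ∫⁻ x in ball 0 r, ENNReal.ofReal (‖x‖ ^ (-β)) ∂μ < ⊤ := by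
  refine IntegrableOn.setLIntegral_lt_top (integrableOn_ball_of_norm_le_rpow (C := 1) hd hβ ?_
    (measurable_norm.pow_const _).aestronglyMeasurable)
  filter_upwards with x
  rw [one_mul, Real.norm_of_nonneg (by positivity)]

end SingularKernel

theorem lintegral_pi_fin_prod_eq_prod {α : Type*} [MeasurableSpace α] :
    ∀ {n : ℕ} (μ : Fin n → Measure α) [∀ i, SigmaFinite (μ i)] {f : Fin n → α → ℝ≥0∞},
    (∀ i, Measurable (f i)) → ∫⁻ x, ∏ i, f i (x i) ∂Measure.pi μ = ∏ i, ∫⁻ y, f i y ∂μ i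
  | 0, μ, _, f, _ => by simp
  | n + 1, μ, _, f, hf => by
    rw [← (measurePreserving_piFinSuccAbove μ 0).symm.lintegral_comp_emb
      (MeasurableEquiv.measurableEmbedding _)]
    simp only [Fin.prod_univ_succ, MeasurableEquiv.piFinSuccAbove_symm_apply,
      Fin.insertNthEquiv_zero, Fin.consEquiv_apply, Fin.cons_zero, Fin.cons_succ,
      Fin.succAbove_zero]
    have hg : Measurable fun y : Fin n → α => ∏ i, f i.succ (y i) :=
      Finset.measurable_prod _ fun i _ => (hf i.succ).comp (measurable_pi_apply i)
    exact (lintegral_prod_mul (hf 0).aemeasurable hg.aemeasurable).trans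
      (by rw [lintegral_pi_fin_prod_eq_prod _ fun i => hf i.succ])

theorem prod_erase_eq_prod_succAbove {M : Type*} [CommMonoid M] {n : ℕ} (f : Fin (n + 1) → M)
    (i : Fin (n + 1)) : ∏ j ∈ univ.erase i, f j = ∏ l, f (i.succAbove l) := by
  rw [← compl_singleton, ← Fin.image_succAbove_univ,
    prod_image Fin.succAbove_right_injective.injOn]

theorem lintegral_pi_prod_erase_le {α : Type*} [MeasurableSpace α] {n : ℕ} (ν : Measure α)
    [SigmaFinite ν] {g : α → α → ℝ≥0∞} (hg : Measurable (Function.uncurry g)) {C : ℝ≥0∞}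
    (hC : ∀ᵐ w ∂ν, ∫⁻ u, g w u ∂ν ≤ C) (i : Fin (n + 1)) :
    ∫⁻ z, ∏ j ∈ univ.erase i, g (z i) (z j) ∂Measure.pi (fun _ => ν) ≤ C ^ n * ν univ := by
  rw [← (measurePreserving_piFinSuccAbove (fun _ => ν) i).symm.lintegral_comp_emb
    (MeasurableEquiv.measurableEmbedding _)]
  simp only [prod_erase_eq_prod_succAbove _ i, MeasurableEquiv.piFinSuccAbove_symm_apply,
    Fin.insertNthEquiv_apply, Fin.insertNth_apply_same, Fin.insertNth_apply_succAbove]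
  have hgw : ∀ w, Measurable (g w) := fun w => hg.of_uncurry_left
  calc ∫⁻ p : α × (Fin n → α), ∏ l, g p.1 (p.2 l) ∂ν.prod (Measure.pi fun _ => ν)
      = ∫⁻ w, ∫⁻ y : Fin n → α, ∏ l, g w (y l) ∂Measure.pi (fun _ => ν) ∂ν :=
        lintegral_prod _ <| (Finset.measurable_prod _ fun l _ => hg.comp <|
          measurable_fst.prodMk ((measurable_pi_apply l).comp measurable_snd)).aemeasurable
    _ = ∫⁻ w, ∏ _l : Fin n, ∫⁻ u, g w u ∂ν ∂ν :=
        lintegral_congr fun w => lintegral_pi_fin_prod_eq_prod _ fun _ => hgw w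
    _ ≤ ∫⁻ _, C ^ n ∂ν :=
        lintegral_mono_ae (hC.mono fun w hw => by
          simpa using prod_le_pow_card (univ : Finset (Fin n)) _ _ fun _ _ => hw)
    _ = C ^ n * ν univ := lintegral_const _

theorem sq_prod_filter_lt_eq_prod_prod_erase {ι M : Type*} [Fintype ι] [LinearOrder ι]
    [CommMonoid M] {b : ι → ι → M} (hb : ∀ i j, b i j = b j i) :
    (∏ p ∈ univ.filter (fun p : ι × ι => p.1 < p.2), b p.1 p.2) ^ 2
      = ∏ i, ∏ j ∈ univ.erase i, b i j := by
  set c : ι → ι → M := fun i j => if i < j then b i j else 1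
  have hc : ∀ i j, c i j * c j i = if j ≠ i then b i j else 1 := by
    intro i j
    rcases lt_trichotomy i j with h | rfl | h
    · simp [c, h, h.ne', not_lt_of_gt h]
    · simp [c]
    · simp [c, h, h.ne, not_lt_of_gt h, hb i j]
  calc (∏ p ∈ univ.filter (fun p : ι × ι => p.1 < p.2), b p.1 p.2) ^ 2
      = (∏ i, ∏ j, c i j) * ∏ i, ∏ j, c j i := by
        rw [sq, prod_comm (f := fun i j => c j i), prod_filter, Fintype.prod_prod_type]
    _ = ∏ i, ∏ j, if j ≠ i then b i j else 1 := by
        simp only [← prod_mul_distrib, hc]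
    _ = ∏ i, ∏ j ∈ univ.erase i, b i j := by
        simp only [← prod_filter, filter_ne']

theorem prod_le_sum_pow_card {ι R : Type*} [CommSemiring R] [LinearOrder R] [IsOrderedRing R]
    {s : Finset ι} (hs : s.Nonempty) {f : ι → R} (hf : ∀ i ∈ s, 0 ≤ f i) :
    ∏ i ∈ s, f i ≤ ∑ i ∈ s, f i ^ #s := by
  obtain ⟨i₀, hi₀, hmax⟩ := exists_max_image s f hs
  calc ∏ i ∈ s, f i ≤ ∏ _i ∈ s, f i₀ := prod_le_prod hf hmax
    _ = f i₀ ^ #s := prod_const _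
    _ ≤ ∑ i ∈ s, f i ^ #s := single_le_sum (fun i hi => pow_nonneg (hf i hi) _) hi₀

theorem prod_filter_lt_rpow_neg_dist_le {X ι : Type*} [PseudoMetricSpace X] [Fintype ι]
    [LinearOrder ι] [Nonempty ι] (s : ℝ) (z : ι → X) :
    ∏ p ∈ univ.filter (fun p : ι × ι => p.1 < p.2),
        ENNReal.ofReal (dist (z p.1) (z p.2) ^ (-s))
      ≤ ∑ i, ∏ j ∈ univ.erase i,
          ENNReal.ofReal (dist (z i) (z j) ^ (-(s / 2 * Fintype.card ι))) := by
  set b : ι → ι → ℝ≥0∞ := fun i j => ENNReal.ofReal (dist (z i) (z j) ^ (-(s / 2)))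
  have hpow : ∀ (m : ℕ) i j, b i j ^ m = ENNReal.ofReal (dist (z i) (z j) ^ (-(s / 2) * m)) :=
    fun m i j => by rw [← ENNReal.ofReal_pow (by positivity), ← Real.rpow_mul_natCast dist_nonneg]
  calc _ = (∏ p ∈ univ.filter (fun p : ι × ι => p.1 < p.2), b p.1 p.2) ^ 2 := by
        rw [← Finset.prod_pow]
        congr! with p
        rw [hpow]
        ring_nf
    _ = ∏ i, ∏ j ∈ univ.erase i, b i j :=
        sq_prod_filter_lt_eq_prod_prod_erase fun i j => by simp only [b, dist_comm]
    _ ≤ ∑ i, (∏ j ∈ univ.erase i, b i j) ^ Fintype.card ι :=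
        prod_le_sum_pow_card univ_nonempty fun _ _ => zero_le
    _ = _ := by
        simp only [← Finset.prod_pow, hpow]
        ring_nf

theorem stmt2_general (γ : ℝ) (k : ℕ) (hk1 : 1 ≤ k)
    (hk : (k : ℝ) < 4 / γ ^ 2) :
    ∫⁻ z in {z : Fin k → ℂ | ∀ i, z i ∈ Metric.ball (0:ℂ) 1},
      ∏ p ∈ Finset.univ.filter (fun p : Fin k × Fin k => p.1 < p.2),
        ENNReal.ofReal (dist (z p.1) (z p.2) ^ (-(γ ^ 2))) < ⊤ := by
  obtain ⟨n, rfl⟩ : ∃ n, k = n + 1 := ⟨k - 1, by omega⟩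
  have hγ : 0 < γ ^ 2 := (sq_nonneg γ).lt_of_ne fun h => by
    rw [← h, div_zero] at hk
    exact (Nat.cast_nonneg _).not_gt hk
  set β := γ ^ 2 / 2 * Fintype.card (Fin (n + 1))
  have hβ : β < Module.finrank ℝ ℂ := by
    have := (lt_div_iff₀ hγ).1 hk
    simp only [β, Fintype.card_fin, Complex.finrank_real_complex]
    push_cast at this ⊢
    linarith
  set ν := (volume : Measure ℂ).restrict (ball 0 1)
  set g : ℂ → ℂ → ℝ≥0∞ := fun w u => ENNReal.ofReal (dist w u ^ (-β))
  set C := ∫⁻ v in ball (0 : ℂ) (2 * 1), ENNReal.ofReal (‖v‖ ^ (-β))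
  have hC : ∀ᵐ w ∂ν, ∫⁻ u, g w u ∂ν ≤ C :=
    (ae_restrict_mem measurableSet_ball).mono fun w hw => setLIntegral_ball_rpow_neg_dist_le hw β
  have hg : Measurable (Function.uncurry g) := (measurable_dist.pow_const _).ennreal_ofReal
  have hpi : {z : Fin (n + 1) → ℂ | ∀ i, z i ∈ ball 0 1} = univ.pi fun _ => ball 0 1 := by
    ext; simp
  rw [hpi, volume_pi, Measure.restrict_pi_pi]
  calc _ ≤ ∫⁻ z, ∑ i, ∏ j ∈ univ.erase i, g (z i) (z j) ∂Measure.pi fun _ => ν :=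
        lintegral_mono fun z => prod_filter_lt_rpow_neg_dist_le _ z
    _ = ∑ i, ∫⁻ z, ∏ j ∈ univ.erase i, g (z i) (z j) ∂Measure.pi fun _ => ν :=
        lintegral_finsetSum _ fun i _ => by fun_prop
    _ ≤ ∑ _i : Fin (n + 1), C ^ n * ν univ :=
        sum_le_sum fun i _ => lintegral_pi_prod_erase_le ν hg hC i
    _ < ⊤ := by
        refine ENNReal.sum_lt_top.2 fun _ _ => ENNReal.mul_lt_top (ENNReal.pow_lt_top ?_) ?_
        · exact setLIntegral_ball_rpow_neg_norm_lt_top (by simp) hβ _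
        · simp [ν]

/-- For `γ ∈ (0,2)` and `1 ≤ k < 4/γ²`, the integral
`u_k = ∫_{𝔻^k} ∏_{i<j} |z_i - z_j|^{-γ²} dz` over the `k`-fold product of the unit disk
is finite. -/
theorem stmt2 (γ : ℝ) (hγ : γ ∈ Set.Ioo (0:ℝ) 2) (k : ℕ) (hk1 : 1 ≤ k)
    (hk : (k : ℝ) < 4 / γ ^ 2) :
    ∫⁻ z in {z : Fin k → ℂ | ∀ i, z i ∈ Metric.ball (0:ℂ) 1},
      ∏ p ∈ Finset.univ.filter (fun p : Fin k × Fin k => p.1 < p.2),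
        ENNReal.ofReal (dist (z p.1) (z p.2) ^ (-(γ ^ 2))) < ⊤ :=
  stmt2_general γ k hk1 hk
end
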